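/- A first order endotactic mass-action system (on ℕ₀^d, with no redundant species) is weakly reversible of deficiency zero if and only if it is monomolecular (every vertex has ℓ₁-norm ≤ 1). -/

import Mathlib

open Matrix Finset
open scoped Matrix Classical

abbrev Vec (d : ℕ) := Fin d → ℝ
abbrev Edge (d : ℕ) := Vec d × Vec d

/-- Sources of edges whose reaction vector is not orthogonal to `u`. -/
def srcU {d : ℕ} (E : Finset (Edge d)) (u : Vec d) : Set (Vec d) :=
  {y | ∃ y', (y, y') ∈ E ∧ (y' - y) ⬝ᵥ u ≠ 0}

/-- `G` is `u`-endotactic: no `u`-endotacticity violating reaction. -/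
def uEndotactic {d : ℕ} (E : Finset (Edge d)) (u : Vec d) : Prop :=
  ¬ ∃ y y', (y, y') ∈ E ∧ 0 < (y' - y) ⬝ᵥ u ∧ ∀ z ∈ srcU E u, z ⬝ᵥ u ≤ y ⬝ᵥ u

def Endotactic {d : ℕ} (E : Finset (Edge d)) : Prop := ∀ u : Vec d, uEndotactic E u

/-- Reachability by a directed path. -/
def Reach {d : ℕ} (E : Finset (Edge d)) : Vec d → Vec d → Prop :=
  Relation.ReflTransGen (fun a b => (a, b) ∈ E)

def IsEig {d : ℕ} (A : Matrix (Fin d) (Fin d) ℝ) (μ : ℂ) : Prop :=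
  ∃ v : Fin d → ℂ, v ≠ 0 ∧ (A.map Complex.ofReal).mulVec v = μ • v

def InV {d : ℕ} (E : Finset (Edge d)) (y : Vec d) : Prop :=
  ∃ e ∈ E, e.1 = y ∨ e.2 = y

def IsSource {d : ℕ} (E : Finset (Edge d)) (y : Vec d) : Prop :=
  ∃ y', (y, y') ∈ E

def SCCeq {d : ℕ} (E : Finset (Edge d)) (a b : Vec d) : Prop :=
  Reach E a b ∧ Reach E b a

noncomputable def vertexFinset {d : ℕ} (E : Finset (Edge d)) : Finset (Vec d) :=
  E.image Prod.fst ∪ E.image Prod.snd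

noncomputable def sccClass {d : ℕ} (E : Finset (Edge d)) (y : Vec d) : Finset (Vec d) :=
  (vertexFinset E).filter (fun z => SCCeq E y z)

noncomputable def numNontrivialSCC {d : ℕ} (E : Finset (Edge d)) : ℕ :=
  (((vertexFinset E).image (sccClass E)).filter (fun C => 2 ≤ C.card)).card

def stoichSpan (d : ℕ) (E : Finset (Edge d)) : Submodule ℝ (Vec d) :=
  Submodule.span ℝ {v | ∃ e ∈ E, v = e.2 - e.1}

def DeficiencyZero {d : ℕ} (E : Finset (Edge d)) : Prop :=
  (vertexFinset E).card = Module.finrank ℝ (stoichSpan d E) + numNontrivialSCC E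

def WeaklyReversible {d : ℕ} (E : Finset (Edge d)) : Prop :=
  ∀ e ∈ E, Reach E e.2 e.1

/-!
Weak reversibility without self-loops makes every vertex a source, so a first order system is then
monomolecular. Conversely, monomolecular vertices in `ℕ^d` are `0` and the unit vectors `eᵢ`, and
every function on them is affine; hence an irreversible edge would yield a linear functional
violating endotacticity. For deficiency zero, summing the coordinates of `v` over the linkage
classes that avoid `0` is a surjection onto `ℝ^{#classes avoiding 0}` whose kernel is the
stoichiometric subspace `S`; counting the vertex `0` and its class separately gives
`#V = dim S + ℓ`.
-/

section ReactionGraph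

variable {d : ℕ} {E : Finset (Edge d)}

noncomputable abbrev sccClasses (E : Finset (Edge d)) : Finset (Finset (Vec d)) :=
  (vertexFinset E).image (sccClass E)

lemma mem_vertexFinset_iff {y : Vec d} : y ∈ vertexFinset E ↔ InV E y := by
  simp only [vertexFinset, mem_union, mem_image, InV, ← exists_or, ← and_or_left]

lemma sub_mem_stoichSpan_of_reach {y z : Vec d} (h : Reach E y z) : z - y ∈ stoichSpan d E := by
  induction h with
  | refl => simp
  | @tail b c _ hbc ih =>
    simpa using Submodule.add_mem _ ih (Submodule.subset_span ⟨(b, c), hbc, rfl⟩)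

lemma isSource_of_weaklyReversible (hsimple : ∀ e ∈ E, e.1 ≠ e.2) (hWR : WeaklyReversible E)
    {y : Vec d} (hy : InV E y) : IsSource E y := by
  obtain ⟨e, he, rfl | rfl⟩ := hy
  · exact ⟨e.2, he⟩
  · rcases (hWR e he).cases_head with heq | ⟨z, hz, _⟩
    · exact absurd heq.symm (hsimple e he)
    · exact ⟨z, hz⟩

lemma mem_sccClass_iff {y z : Vec d} : z ∈ sccClass E y ↔ z ∈ vertexFinset E ∧ SCCeq E y z :=
  mem_filter

lemma mem_sccClass_self {y : Vec d} (hy : y ∈ vertexFinset E) : y ∈ sccClass E y :=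
  mem_sccClass_iff.mpr ⟨hy, .refl, .refl⟩

lemma sccClass_eq_of_mem {y z : Vec d} (hz : z ∈ sccClass E y) : sccClass E z = sccClass E y := by
  obtain ⟨-, hyz, hzy⟩ := mem_sccClass_iff.mp hz
  refine filter_congr fun x _ => ?_
  exact ⟨fun h => ⟨hyz.trans h.1, h.2.trans hzy⟩, fun h => ⟨hzy.trans h.1, h.2.trans hyz⟩⟩

lemma fst_mem_sccClass_snd (hWR : WeaklyReversible E) {e : Edge d} (he : e ∈ E) :
    e.1 ∈ sccClass E e.2 :=
  mem_sccClass_iff.mpr ⟨mem_vertexFinset_iff.mpr ⟨e, he, .inl rfl⟩, hWR e he, .single he⟩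

lemma eq_sccClass_of_mem {C : Finset (Vec d)} (hC : C ∈ sccClasses E) {y : Vec d} (hy : y ∈ C) :
    C = sccClass E y := by
  obtain ⟨x, -, rfl⟩ := mem_image.mp hC
  exact (sccClass_eq_of_mem hy).symm

lemma mem_vertexFinset_of_mem_sccClasses {C : Finset (Vec d)} (hC : C ∈ sccClasses E) {y : Vec d}
    (hy : y ∈ C) : y ∈ vertexFinset E := by
  obtain ⟨x, -, rfl⟩ := mem_image.mp hC
  exact (mem_sccClass_iff.mp hy).1

lemma numNontrivialSCC_eq_card_sccClasses (hsimple : ∀ e ∈ E, e.1 ≠ e.2)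
    (hWR : WeaklyReversible E) : numNontrivialSCC E = (sccClasses E).card := by
  refine congrArg card (filter_true_of_mem fun C hC => ?_)
  obtain ⟨y, hy, rfl⟩ := mem_image.mp hC
  obtain ⟨e, he, hye⟩ := mem_vertexFinset_iff.mp hy
  have h1 := fst_mem_sccClass_snd hWR he
  have h2 := mem_sccClass_self (mem_vertexFinset_iff.mpr ⟨e, he, .inr rfl⟩)
  have hclass : sccClass E y = sccClass E e.2 := by
    rcases hye with rfl | rfl
    · exact sccClass_eq_of_mem h1
    · rfl
  rw [hclass]
  exact one_lt_card.mpr ⟨_, h1, _, h2, hsimple e he⟩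

lemma card_filter_mem_sccClasses (y : Vec d) :
    ((sccClasses E).filter (y ∈ ·)).card = if y ∈ vertexFinset E then 1 else 0 := by
  split_ifs with hy
  · refine card_eq_one.mpr ⟨sccClass E y, eq_singleton_iff_unique_mem.mpr ⟨?_, ?_⟩⟩
    · exact mem_filter.mpr ⟨mem_image_of_mem _ hy, mem_sccClass_self hy⟩
    · intro C hC
      exact eq_sccClass_of_mem (mem_filter.mp hC).1 (mem_filter.mp hC).2
  · exact card_eq_zero.mpr (filter_eq_empty_iff.mpr fun C hC hyC =>
      hy (mem_vertexFinset_of_mem_sccClasses hC hyC))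

end ReactionGraph

section Monomolecular

variable {d : ℕ} {E : Finset (Edge d)}

/-- In `ℕ^d`, the complexes of `ℓ₁`-norm at most one are exactly `0` and the unit vectors. -/
def IsMonomolecular (E : Finset (Edge d)) : Prop :=
  ∀ y, InV E y → y = 0 ∨ ∃ i, y = Pi.single i 1

lemma eq_zero_or_eq_single_of_sum_le_one {y : Vec d} (hy : ∀ i, ∃ n : ℕ, y i = n)
    (hsum : ∑ i, y i ≤ 1) : y = 0 ∨ ∃ i, y = Pi.single i 1 := by
  rcases eq_or_ne y 0 with rfl | hne
  · exact .inl rfl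
  obtain ⟨i, hi⟩ : ∃ i, y i ≠ 0 := Function.ne_iff.mp hne
  have hnonneg : ∀ j, 0 ≤ y j := fun j => by
    obtain ⟨n, hn⟩ := hy j
    exact hn ▸ n.cast_nonneg
  have hi1 : 1 ≤ y i := by
    obtain ⟨n, hn⟩ := hy i
    rw [hn] at hi ⊢
    exact_mod_cast Nat.one_le_iff_ne_zero.mpr (by exact_mod_cast hi)
  rw [← add_sum_erase _ _ (mem_univ i)] at hsum
  have hrest : ∑ j ∈ univ.erase i, y j = 0 :=
    le_antisymm (by linarith) (sum_nonneg fun j _ => hnonneg j)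
  refine .inr ⟨i, funext fun j => ?_⟩
  by_cases hj : j = i
  · subst hj
    simp only [Pi.single_eq_same]
    linarith
  · rw [sum_eq_zero_iff_of_nonneg fun j _ => hnonneg j] at hrest
    simp [hj, hrest j (by simp [hj])]

lemma isMonomolecular_of_sum_le_one (hnat : ∀ y, InV E y → ∀ i, ∃ n : ℕ, y i = (n : ℝ))
    (hmono : ∀ y, InV E y → ∑ i, y i ≤ 1) : IsMonomolecular E := fun y hy =>
  eq_zero_or_eq_single_of_sum_le_one (hnat y hy) (hmono y hy)

lemma inV_single (hM : IsMonomolecular E) (hnored : ∀ i : Fin d, ∃ e ∈ E, e.2 i ≠ e.1 i)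
    (i : Fin d) : InV E (Pi.single i 1) := by
  obtain ⟨e, he, hi⟩ := hnored i
  obtain ⟨y, hy, hyi⟩ : ∃ y, InV E y ∧ y i ≠ 0 := by
    by_cases h : e.2 i = 0
    · exact ⟨e.1, ⟨e, he, .inl rfl⟩, fun h' => hi (h.trans h'.symm)⟩
    · exact ⟨e.2, ⟨e, he, .inr rfl⟩, h⟩
  obtain rfl | ⟨j, rfl⟩ := hM y hy
  · exact absurd rfl hyi
  · obtain rfl : i = j := by
      by_contra hij
      exact hyi (Pi.single_eq_of_ne hij 1)
    exact hy

lemma exists_dotProduct_eq_indicator (p : Vec d → Prop) :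
    ∃ u : Vec d, ∃ c : ℝ, ∀ y : Vec d, (y = 0 ∨ ∃ i, y = Pi.single i 1) →
      y ⬝ᵥ u = c + if p y then 1 else 0 := by
  refine ⟨fun i => -(if p 0 then 1 else 0) + if p (Pi.single i 1) then 1 else 0,
    -(if p 0 then 1 else 0), ?_⟩
  rintro y (rfl | ⟨i, rfl⟩)
  · simp
  · simp [single_dotProduct]

/-- If the edge `a → b` could not be reversed, the functional `u` equal to `c + 1` on the vertices
reachable from `b` and to `c` elsewhere would make `a → b` violate `u`-endotacticity. -/
lemma weaklyReversible_of_endotactic (hM : IsMonomolecular E) (hendo : Endotactic E) :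
    WeaklyReversible E := by
  rintro ⟨a, b⟩ he
  by_contra hba
  obtain ⟨u, c, hu⟩ := exists_dotProduct_eq_indicator (Reach E b)
  have hval : ∀ y, InV E y → y ⬝ᵥ u = c + if Reach E b y then 1 else 0 := fun y hy =>
    hu y (hM y hy)
  have ha : a ⬝ᵥ u = c := by simpa [hba] using hval a ⟨_, he, .inl rfl⟩
  have hb : b ⬝ᵥ u = c + 1 := by
    rw [hval b ⟨_, he, .inr rfl⟩, if_pos (show Reach E b b from .refl)]
  refine hendo u ⟨a, b, he, by rw [sub_dotProduct, ha, hb]; norm_num, ?_⟩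
  rintro z ⟨z', hz', hzu⟩
  have hbz : ¬ Reach E b z := fun hbz => hzu <| by
    rw [sub_dotProduct, hval z ⟨_, hz', .inl rfl⟩, hval z' ⟨_, hz', .inr rfl⟩,
      if_pos hbz, if_pos (show Reach E b z' from hbz.tail hz'), sub_self]
  rw [ha, hval z ⟨_, hz', .inl rfl⟩, if_neg hbz, add_zero]

end Monomolecular

section DeficiencyZero

variable {d : ℕ} {E : Finset (Edge d)}

noncomputable def zeroFreeClasses (E : Finset (Edge d)) : Finset (Finset (Vec d)) :=
  (sccClasses E).filter ((0 : Vec d) ∉ ·)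

noncomputable def coordSumOn (C : Finset (Vec d)) : Vec d →ₗ[ℝ] ℝ :=
  ∑ i ∈ univ.filter (fun i => Pi.single i 1 ∈ C), LinearMap.proj i

noncomputable def classCoordSum (E : Finset (Edge d)) : Vec d →ₗ[ℝ] (zeroFreeClasses E → ℝ) :=
  LinearMap.pi fun C => coordSumOn C.1

noncomputable def basePoint (C : Finset (Vec d)) : Vec d :=
  Classical.epsilon fun z => z ∈ C ∧ ((0 : Vec d) ∈ C → z = 0)

lemma basePoint_spec {C : Finset (Vec d)} (hC : C.Nonempty) :
    basePoint C ∈ C ∧ ((0 : Vec d) ∈ C → basePoint C = 0) := by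
  refine Classical.epsilon_spec (p := fun z => z ∈ C ∧ ((0 : Vec d) ∈ C → z = 0)) ?_
  by_cases h0 : (0 : Vec d) ∈ C
  · exact ⟨0, h0, fun _ => rfl⟩
  · obtain ⟨z, hz⟩ := hC
    exact ⟨z, hz, fun h => absurd h h0⟩

lemma basePoint_mem_of_mem_sccClasses {C : Finset (Vec d)} (hC : C ∈ sccClasses E) :
    basePoint C ∈ C := by
  obtain ⟨y, hy, rfl⟩ := mem_image.mp hC
  exact (basePoint_spec ⟨y, mem_sccClass_self hy⟩).1

lemma coordSumOn_apply (C : Finset (Vec d)) (v : Vec d) :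
    coordSumOn C v = ∑ i ∈ univ.filter (fun i => Pi.single i 1 ∈ C), v i := by
  simp [coordSumOn]

lemma coordSumOn_single (C : Finset (Vec d)) (j : Fin d) :
    coordSumOn C (Pi.single j 1) = if Pi.single j 1 ∈ C then 1 else 0 := by
  simp [coordSumOn_apply, Pi.single_apply]

lemma coordSumOn_of_isMonomolecular (hM : IsMonomolecular E) {C : Finset (Vec d)}
    (h0 : (0 : Vec d) ∉ C) {y : Vec d} (hy : InV E y) :
    coordSumOn C y = if y ∈ C then 1 else 0 := by
  obtain rfl | ⟨j, rfl⟩ := hM y hy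
  · simp [h0]
  · exact coordSumOn_single C j

lemma fst_mem_iff_snd_mem (hWR : WeaklyReversible E) {C : Finset (Vec d)} (hC : C ∈ sccClasses E)
    {e : Edge d} (he : e ∈ E) : e.1 ∈ C ↔ e.2 ∈ C := by
  have hclass : sccClass E e.1 = sccClass E e.2 := sccClass_eq_of_mem (fst_mem_sccClass_snd hWR he)
  have h1 := mem_sccClass_self (mem_vertexFinset_iff.mpr ⟨e, he, .inl rfl⟩)
  have h2 := mem_sccClass_self (mem_vertexFinset_iff.mpr ⟨e, he, .inr rfl⟩)
  constructor
  · intro h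
    rw [eq_sccClass_of_mem hC h, hclass]
    exact h2
  · intro h
    rw [eq_sccClass_of_mem hC h, ← hclass]
    exact h1

lemma stoichSpan_le_ker_classCoordSum (hM : IsMonomolecular E) (hWR : WeaklyReversible E) :
    stoichSpan d E ≤ LinearMap.ker (classCoordSum E) := by
  refine Submodule.span_le.mpr ?_
  rintro _ ⟨e, he, rfl⟩
  ext ⟨C, hC⟩
  obtain ⟨hCcl, h0⟩ := mem_filter.mp hC
  simp only [classCoordSum, LinearMap.pi_apply, map_sub, Pi.zero_apply]
  rw [coordSumOn_of_isMonomolecular hM h0 ⟨e, he, .inl rfl⟩,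
    coordSumOn_of_isMonomolecular hM h0 ⟨e, he, .inr rfl⟩,
    if_congr (fst_mem_iff_snd_mem hWR hCcl he) rfl rfl, sub_self]

/-- Writing `rᵢ` for the base point of the class of `eᵢ`, `v = ∑ vᵢ (eᵢ - rᵢ) + ∑ vᵢ rᵢ`: the first
sum lies in the stoichiometric subspace, and the second groups by classes into
`∑_C (coordSumOn C v) • basePoint C`, which vanishes on the kernel. -/
lemma ker_classCoordSum_le_stoichSpan (hunit : ∀ i : Fin d, InV E (Pi.single i 1)) :
    LinearMap.ker (classCoordSum E) ≤ stoichSpan d E := by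
  intro v hv
  set r : Fin d → Vec d := fun i => basePoint (sccClass E (Pi.single i 1))
  have hunitV : ∀ i, (Pi.single i 1 : Vec d) ∈ vertexFinset E := fun i =>
    mem_vertexFinset_iff.mpr (hunit i)
  have hdiff : ∑ i, v i • (Pi.single i 1 - r i) ∈ stoichSpan d E := by
    refine Submodule.sum_mem _ fun i _ => Submodule.smul_mem _ _ (sub_mem_stoichSpan_of_reach ?_)
    exact (mem_sccClass_iff.mp (basePoint_spec ⟨_, mem_sccClass_self (hunitV i)⟩).1).2.2
  have hbase : ∑ i, v i • r i = 0 := by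
    rw [← sum_fiberwise_of_maps_to (g := fun i => sccClass E (Pi.single i 1))
      (t := sccClasses E) fun i _ => mem_image_of_mem _ (hunitV i)]
    refine sum_eq_zero fun C hC => ?_
    have hfiber : univ.filter (fun i => sccClass E (Pi.single i 1) = C) =
        univ.filter (fun i => Pi.single i 1 ∈ C) :=
      filter_congr fun i _ => ⟨fun h => h ▸ mem_sccClass_self (hunitV i),
        fun h => (eq_sccClass_of_mem hC h).symm⟩
    have hsmul : ∀ i ∈ univ.filter (fun i => sccClass E (Pi.single i 1) = C),
        v i • r i = v i • basePoint C := fun i hi => by simp only [r, (mem_filter.mp hi).2]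
    rw [sum_congr rfl hsmul, ← sum_smul, hfiber, ← coordSumOn_apply]
    by_cases h0 : (0 : Vec d) ∈ C
    · rw [(basePoint_spec ⟨0, h0⟩).2 h0, smul_zero]
    · rw [show coordSumOn C v = 0 from congrFun hv ⟨C, mem_filter.mpr ⟨hC, h0⟩⟩, zero_smul]
  have hv_eq : v = ∑ i, v i • (Pi.single i 1 - r i) + ∑ i, v i • r i := by
    rw [← sum_add_distrib]
    ext j
    simp [smul_sub, Pi.single_apply]
  rw [hv_eq, hbase, add_zero]
  exact hdiff

lemma classCoordSum_basePoint (hM : IsMonomolecular E) (C : zeroFreeClasses E) :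
    classCoordSum E (basePoint C) = Pi.single C 1 := by
  obtain ⟨hCcl, h0⟩ := mem_filter.mp C.2
  have hmem := basePoint_mem_of_mem_sccClasses hCcl
  have hV := mem_vertexFinset_iff.mp (mem_vertexFinset_of_mem_sccClasses hCcl hmem)
  ext C'
  obtain ⟨hC'cl, h0'⟩ := mem_filter.mp C'.2
  have hiff : basePoint C.1 ∈ C'.1 ↔ C' = C := by
    refine ⟨fun h => Subtype.ext ?_, fun h => h ▸ hmem⟩
    exact (eq_sccClass_of_mem hC'cl h).trans (eq_sccClass_of_mem hCcl hmem).symm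
  simp only [classCoordSum, LinearMap.pi_apply, Pi.single_apply]
  rw [coordSumOn_of_isMonomolecular hM h0' hV, if_congr hiff rfl rfl]

lemma classCoordSum_surjective (hM : IsMonomolecular E) : Function.Surjective (classCoordSum E) := by
  intro w
  refine ⟨∑ C, w C • basePoint C, ?_⟩
  ext C
  simp [classCoordSum_basePoint hM, Pi.single_apply]

lemma finrank_stoichSpan_add_card_zeroFreeClasses (hM : IsMonomolecular E)
    (hunit : ∀ i : Fin d, InV E (Pi.single i 1)) (hWR : WeaklyReversible E) :
    Module.finrank ℝ (stoichSpan d E) + (zeroFreeClasses E).card = d := by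
  have hker : LinearMap.ker (classCoordSum E) = stoichSpan d E :=
    le_antisymm (ker_classCoordSum_le_stoichSpan hunit) (stoichSpan_le_ker_classCoordSum hM hWR)
  have hrank := LinearMap.finrank_range_add_finrank_ker (classCoordSum E)
  rw [LinearMap.range_eq_top.mpr (classCoordSum_surjective hM), finrank_top, hker] at hrank
  simpa [add_comm] using hrank

lemma card_vertexFinset_of_isMonomolecular (hM : IsMonomolecular E)
    (hunit : ∀ i : Fin d, InV E (Pi.single i 1)) :
    (vertexFinset E).card = d + if (0 : Vec d) ∈ vertexFinset E then 1 else 0 := by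
  have hunits : (vertexFinset E).filter (· ≠ 0) = univ.image fun i => Pi.single i 1 := by
    ext y
    simp only [mem_filter, mem_image, mem_univ, true_and, mem_vertexFinset_iff]
    constructor
    · rintro ⟨hy, hy0⟩
      exact ((hM y hy).resolve_left hy0).imp fun i h => h.symm
    · rintro ⟨i, rfl⟩
      exact ⟨hunit i, fun h => by simpa using congrFun h i⟩
  have hinj : Function.Injective fun i : Fin d => (Pi.single i 1 : Vec d) := fun i j h => by
    by_contra hij
    simpa [Pi.single_apply, hij] using congrFun h i
  rw [← card_filter_add_card_filter_not (· = 0), filter_eq', hunits, card_image_of_injective _ hinj]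
  split_ifs <;> simp [add_comm]

lemma card_sccClasses (E : Finset (Edge d)) :
    (sccClasses E).card =
      (zeroFreeClasses E).card + if (0 : Vec d) ∈ vertexFinset E then 1 else 0 := by
  rw [← card_filter_mem_sccClasses, zeroFreeClasses, add_comm]
  exact (card_filter_add_card_filter_not _).symm

lemma deficiencyZero_of_isMonomolecular (hsimple : ∀ e ∈ E, e.1 ≠ e.2) (hM : IsMonomolecular E)
    (hunit : ∀ i : Fin d, InV E (Pi.single i 1)) (hWR : WeaklyReversible E) : DeficiencyZero E := by
  have hrank := finrank_stoichSpan_add_card_zeroFreeClasses hM hunit hWR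
  rw [DeficiencyZero, numNontrivialSCC_eq_card_sccClasses hsimple hWR, card_sccClasses,
    card_vertexFinset_of_isMonomolecular hM hunit]
  omega

end DeficiencyZero

/-- A first order endotactic mass-action system is weakly reversible of
deficiency zero iff it is monomolecular (all vertices of `ℓ₁`-norm `≤ 1`). -/
theorem stmt18 {d : ℕ} (E : Finset (Edge d))
    (hsimple : ∀ e ∈ E, e.1 ≠ e.2)
    (hnat : ∀ y, InV E y → ∀ i, ∃ n : ℕ, y i = (n : ℝ))
    (hfo : ∀ y, IsSource E y → ∑ i, y i ≤ 1)
    (hnored : ∀ i : Fin d, ∃ e ∈ E, e.2 i ≠ e.1 i)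
    (hendo : Endotactic E) :
    (WeaklyReversible E ∧ DeficiencyZero E) ↔ (∀ y, InV E y → ∑ i, y i ≤ 1) := by
  refine ⟨fun ⟨hWR, _⟩ y hy => hfo y (isSource_of_weaklyReversible hsimple hWR hy), fun hmono => ?_⟩
  have hM := isMonomolecular_of_sum_le_one hnat hmono
  have hWR := weaklyReversible_of_endotactic hM hendo
  exact ⟨hWR, deficiencyZero_of_isMonomolecular hsimple hM (inV_single hM hnored) hWR⟩
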